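/- For a finitely supported multi-index ν and a unit multi-index e (i.e. |e| = 1), the sum over all multi-indices η with 0 < η ≤ ν of C(ν,η)·[1/2]_{|ν+e-η|}·[1/2]_{|η|} is at most [1/2]_{|ν+e|}. -/

import Mathlib

/-- `ffHalf n = |(1/2)_n|`, the absolute value of the falling factorial of `1/2`. -/
noncomputable def ffHalf (n : ℕ) : ℝ := |(descPochhammer ℝ n).eval (1/2 : ℝ)|

/-- degree `|ν|` of a multi-index: the sum of its entries. -/
def mdeg (ν : ℕ →₀ ℕ) : ℕ := ν.sum fun _ k => k

/-- multi-index binomial coefficient `C(ν,η) = ∏_j C(ν_j, η_j)`. -/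
def mchoose (ν η : ℕ →₀ ℕ) : ℕ := ∏ j ∈ ν.support, (ν j).choose (η j)

/-!
For `η ≤ ν` we have `|ν + e - η| = |ν - η| + 1`, so the summand depends on `η` only through
`|η|` and `|ν - η| = |ν| - |η|`. Comparing coefficients in `∏ⱼ (1 + X) ^ νⱼ = (1 + X) ^ |ν|` gives
the multi-index Vandermonde identity `∑_{η ≤ ν, |η| = k} C(ν,η) = C(|ν|,k)`, which turns the sum
into `∑_{i + j = n} C(n + 1, i + 1) [1/2]_{i+1} [1/2]_{j+1}` with `|ν| = n + 1`.
Since `(1/2)_{j+1} = ½ (-1/2)_j`, the Chu–Vandermonde identity gives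
`∑_{i + j = n + 1} C(n + 1, i) (1/2)_i (1/2)_{j+1} = ½ (0)_{n+1} = 0`, and because `(1/2)_{k+1}`
has sign `(-1)^k` this says exactly that the sum equals `[1/2]_{n+2} = [1/2]_{|ν+e|}`.
When `ν = 0` the sum is empty.
-/

open Finset Polynomial

theorem descPochhammer_eval_eq_smeval {R : Type*} [CommRing R] (x : R) (n : ℕ) :
    (descPochhammer R n).eval x = (descPochhammer ℤ n).smeval x := by
  rw [← aeval_eq_smeval, ← eval_map_algebraMap, descPochhammer_map]

theorem descPochhammer_eval_add {R : Type*} [CommRing R] (x y : R) (n : ℕ) :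
    (descPochhammer R n).eval (x + y) = ∑ p ∈ antidiagonal n,
      n.choose p.1 * ((descPochhammer R p.1).eval x * (descPochhammer R p.2).eval y) := by
  simp only [descPochhammer_eval_eq_smeval]
  exact Ring.descPochhammer_smeval_add n (Commute.all x y)

theorem sum_antidiagonal_choose_mul_descPochhammer_succ_eval {R : Type*} [CommRing R] (x : R)
    (n : ℕ) :
    ∑ p ∈ antidiagonal n, n.choose p.1 *
        ((descPochhammer R p.1).eval x * (descPochhammer R (p.2 + 1)).eval x)
      = x * (descPochhammer R n).eval (x + (x - 1)) := by
  rw [descPochhammer_eval_add, mul_sum]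
  refine sum_congr rfl fun p _ => ?_
  rw [descPochhammer_succ_left, eval_mul, eval_X, eval_comp, eval_sub, eval_X, eval_one]
  ring

@[simp] theorem ffHalf_zero : ffHalf 0 = 1 := by simp [ffHalf]

theorem ffHalf_nonneg (n : ℕ) : 0 ≤ ffHalf n := abs_nonneg _

theorem descPochhammer_succ_eval_half (k : ℕ) :
    (descPochhammer ℝ (k + 1)).eval (1 / 2) = (-1) ^ k * ffHalf (k + 1) := by
  induction k with
  | zero => simp [ffHalf]
  | succ k ih =>
    have hk : |1 / 2 - ((k + 1 : ℕ) : ℝ)| = k + 1 / 2 := by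
      rw [abs_of_neg (by push_cast; linarith)]; push_cast; ring
    rw [ffHalf, descPochhammer_succ_eval, abs_mul, ih, abs_mul, abs_pow, abs_neg, abs_one,
      one_pow, one_mul, ffHalf, abs_abs, hk]
    push_cast; ring

theorem sum_antidiagonal_choose_succ_mul_ffHalf (m : ℕ) :
    ∑ p ∈ antidiagonal m, ((m + 1).choose (p.1 + 1) : ℝ) * (ffHalf (p.1 + 1) * ffHalf (p.2 + 1))
      = ffHalf (m + 2) := by
  have h := sum_antidiagonal_choose_mul_descPochhammer_succ_eval (1 / 2 : ℝ) (m + 1)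
  rw [show (1 / 2 : ℝ) + (1 / 2 - 1) = 0 by norm_num,
    descPochhammer_ne_zero_eval_zero _ m.succ_ne_zero, mul_zero, Nat.sum_antidiagonal_succ] at h
  have hsign : ∀ p ∈ antidiagonal m, ((m + 1).choose (p.1 + 1) : ℝ) *
      ((descPochhammer ℝ (p.1 + 1)).eval (1 / 2) * (descPochhammer ℝ (p.2 + 1)).eval (1 / 2))
      = (-1) ^ m * (((m + 1).choose (p.1 + 1) : ℝ) * (ffHalf (p.1 + 1) * ffHalf (p.2 + 1))) := by
    intro p hp
    rw [descPochhammer_succ_eval_half, descPochhammer_succ_eval_half, ← mem_antidiagonal.mp hp,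
      pow_add]
    ring
  rw [sum_congr rfl hsign, ← mul_sum, descPochhammer_succ_eval_half] at h
  simp only [Nat.choose_zero_right, Nat.cast_one, descPochhammer_zero, eval_one, one_mul,
    pow_succ] at h
  rcases neg_one_pow_eq_or ℝ m with hm | hm <;> rw [hm] at h <;> linarith

theorem Finsupp.sum_Iic_prod_eq_prod_sum {ι R : Type*} [DecidableEq ι] [CommSemiring R]
    (ν : ι →₀ ℕ) (g : ι → ℕ → R) :
    ∑ η ∈ Iic ν, ∏ i ∈ ν.support, g i (η i) = ∏ i ∈ ν.support, ∑ k ∈ Iic (ν i), g i k := by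
  rw [prod_sum, Iic_eq_Icc, Finsupp.Icc_eq, Finset.finsupp, sum_map, bot_eq_zero, support_zero,
    empty_union]
  refine Finset.sum_congr (by convert rfl; rw [coe_rangeIcc]; rfl) fun p _ => ?_
  rw [← prod_attach]
  refine Finset.prod_congr rfl fun i _ => ?_
  simp

@[simp] theorem mdeg_zero : mdeg 0 = 0 := rfl

theorem mdeg_add (ν μ : ℕ →₀ ℕ) : mdeg (ν + μ) = mdeg ν + mdeg μ := map_add Finsupp.degree ν μ

theorem mdeg_single (i n : ℕ) : mdeg (Finsupp.single i n) = n := Finsupp.degree_single i n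

theorem mdeg_tsub {η ν : ℕ →₀ ℕ} (h : η ≤ ν) : mdeg (ν - η) = mdeg ν - mdeg η := by
  have := congrArg mdeg (tsub_add_cancel_of_le h)
  rw [mdeg_add] at this
  omega

theorem mdeg_eq_sum_of_le {η ν : ℕ →₀ ℕ} (h : η ≤ ν) : mdeg η = ∑ i ∈ ν.support, η i :=
  Finsupp.sum_of_support_subset η (Finsupp.support_mono h) _ fun _ _ => rfl

@[simp] theorem mchoose_zero_right (ν : ℕ →₀ ℕ) : mchoose ν 0 = 1 := by simp [mchoose]

theorem sum_Iic_mchoose_mul_pow {R : Type*} [CommSemiring R] (ν : ℕ →₀ ℕ) (x : R) :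
    ∑ η ∈ Iic ν, (mchoose ν η : R) * x ^ mdeg η = (x + 1) ^ mdeg ν := by
  have hprod : ∀ η ∈ Iic ν, (mchoose ν η : R) * x ^ mdeg η
      = ∏ i ∈ ν.support, ((ν i).choose (η i) * x ^ η i) := fun η hη => by
    rw [prod_mul_distrib, prod_pow_eq_pow_sum, mchoose, Nat.cast_prod,
      ← mdeg_eq_sum_of_le (mem_Iic.mp hη)]
  rw [sum_congr rfl hprod,
    Finsupp.sum_Iic_prod_eq_prod_sum ν fun i k => ((ν i).choose k : R) * x ^ k,
    mdeg_eq_sum_of_le le_rfl, ← prod_pow_eq_pow_sum]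
  refine prod_congr rfl fun i _ => ?_
  rw [add_pow, ← Nat.range_succ_eq_Iic]
  refine sum_congr rfl fun k _ => ?_
  ring

theorem sum_Iic_mchoose_mul {R : Type*} [CommSemiring R] (ν : ℕ →₀ ℕ) (F : ℕ → R) :
    ∑ η ∈ Iic ν, (mchoose ν η : R) * F (mdeg η)
      = ∑ k ∈ range (mdeg ν + 1), ((mdeg ν).choose k : R) * F k := by
  -- `L` is the linear functional `∑ₖ cₖ Xᵏ ↦ ∑ₖ cₖ F k`.
  set L : R[X] →ₗ[R] R := lsum fun k => LinearMap.mulRight R (F k)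
  have hL : ∀ c k : ℕ, L ((c : R[X]) * X ^ k) = c * F k := fun c k => by
    rw [← C_eq_natCast, C_mul_X_pow_eq_monomial, lsum_apply, sum_monomial_index] <;> simp
  have h := congrArg L (sum_Iic_mchoose_mul_pow ν (X : R[X]))
  rw [add_pow, map_sum, map_sum] at h
  simpa [hL, mul_comm] using h

theorem sum_Iic_mchoose_mul_antidiagonal {R : Type*} [CommSemiring R] (ν : ℕ →₀ ℕ)
    (G : ℕ → ℕ → R) :
    ∑ η ∈ Iic ν, (mchoose ν η : R) * G (mdeg η) (mdeg (ν - η))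
      = ∑ p ∈ antidiagonal (mdeg ν), ((mdeg ν).choose p.1 : R) * G p.1 p.2 := by
  rw [Nat.sum_antidiagonal_eq_sum_range_succ (fun i j => ((mdeg ν).choose i : R) * G i j),
    ← sum_Iic_mchoose_mul]
  refine sum_congr rfl fun η hη => ?_
  rw [mdeg_tsub (mem_Iic.mp hη)]

theorem sum_Ioc_mchoose_mul_ffHalf {ν : ℕ →₀ ℕ} (hν : ν ≠ 0) :
    ∑ η ∈ Ioc 0 ν, (mchoose ν η : ℝ) * (ffHalf (mdeg η) * ffHalf (mdeg (ν - η) + 1))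
      = ffHalf (mdeg ν + 1) := by
  obtain ⟨m, hm⟩ : ∃ m, mdeg ν = m + 1 :=
    Nat.exists_eq_succ_of_ne_zero (mt (Finsupp.degree_eq_zero_iff ν).mp hν)
  have h := sum_Iic_mchoose_mul_antidiagonal ν fun i j => ffHalf i * ffHalf (j + 1)
  rw [Iic_eq_Icc, bot_eq_zero, Icc_eq_cons_Ioc (zero_le (a := ν)), sum_cons, hm,
    Nat.sum_antidiagonal_succ, sum_antidiagonal_choose_succ_mul_ffHalf m] at h
  simp only [mchoose_zero_right, mdeg_zero, tsub_zero, hm, Nat.choose_zero_right, ffHalf_zero,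
    Nat.cast_one, one_mul] at h
  rw [hm]
  linarith

theorem ffHalf_multiindex_shifted_sum_le (ν e : ℕ →₀ ℕ) (j : ℕ)
    (he : e = Finsupp.single j 1) :
    ∑ η ∈ Finset.Ioc 0 ν,
        (mchoose ν η : ℝ) * ffHalf (mdeg (ν + e - η)) * ffHalf (mdeg η)
      ≤ ffHalf (mdeg (ν + e)) := by
  subst he
  rcases eq_or_ne ν 0 with rfl | hν
  · simpa using ffHalf_nonneg _
  rw [mdeg_add, mdeg_single, ← sum_Ioc_mchoose_mul_ffHalf hν]
  refine (sum_congr rfl fun η hη => ?_).le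
  rw [← tsub_add_eq_add_tsub (mem_Ioc.mp hη).2, mdeg_add, mdeg_single]
  ring
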